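/- arXiv:1204.5508 — 3 statements merged into one kernel-verified Lean document; each statement's English description precedes it below -/
import Mathlib

section
/- Let n ∈ ℕ and let f : {0,1}^n ⇀ {0,1}^n be an ℓ-sequential partial function. Let M ⊆ {0,1}^n be a set with |dom f ∪ M| < 2^n. Then there exists an (ℓ+1)-sequential extension f' ⊇ f with dom f' = dom f ∪ M. -/
/-- Length-`n` bit strings. -/
abbrev Str (n : ℕ) := Fin n → Bool

/-- The all-zero string `0^n`. -/
def zeroStr (n : ℕ) : Str n := fun _ => false

/-- `seq` is the chain of iterates of the partial function `f` starting at `0^n`,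
defined up to index `k`. -/
def PChain {n : ℕ} (f : Str n → Option (Str n)) (seq : ℕ → Str n) (k : ℕ) : Prop :=
  seq 0 = zeroStr n ∧ ∀ i < k, f (seq i) = some (seq (i + 1))

/-- `f` is ℓ-sequential: for some `k ≤ ℓ` the iterates `0, f(0), …, f^k(0)` are all
defined but `f^k(0) ∉ dom f`. -/
def PSequential {n : ℕ} (f : Str n → Option (Str n)) (ℓ : ℕ) : Prop :=
  ∃ k ≤ ℓ, ∃ seq : ℕ → Str n, PChain f seq k ∧ f (seq k) = none

/-- Lemma on ℓ-sequential extensions: if `f` is ℓ-sequential and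
`M ⊆ {0,1}^n` satisfies `|dom f ∪ M| < 2^n`, then there is an (ℓ+1)-sequential
extension `f' ⊇ f` with `dom f' = dom f ∪ M`. -/
theorem stmt1 (n ℓ : ℕ) (f : Str n → Option (Str n)) (M : Set (Str n))
    (hseq : PSequential f ℓ)
    (hcard : ({x | f x ≠ none} ∪ M).ncard < 2 ^ n) :
    ∃ f' : Str n → Option (Str n),
      (∀ x, f x ≠ none → f' x = f x) ∧
      {x | f' x ≠ none} = {x | f x ≠ none} ∪ M ∧
      PSequential f' (ℓ + 1) := by
  classical
  -- find z outside the union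
  have hne : ({x | f x ≠ none} ∪ M) ≠ Set.univ := by
    intro h
    rw [h, Set.ncard_univ, Nat.card_eq_fintype_card] at hcard
    simp [Fintype.card_fun] at hcard
  obtain ⟨z, hz⟩ : ∃ z : Str n, z ∉ ({x | f x ≠ none} ∪ M) := by
    by_contra h
    push_neg at h
    exact hne (Set.eq_univ_of_forall h)
  have hzf : f z = none := by
    by_contra h; exact hz (Or.inl h)
  have hzM : z ∉ M := fun h => hz (Or.inr h)
  set f' : Str n → Option (Str n) :=
    fun x => if f x ≠ none then f x else if x ∈ M then some z else none with hf'
  have hext : ∀ x, f x ≠ none → f' x = f x := by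
    intro x hx; simp [hf', hx]
  have hdom : {x | f' x ≠ none} = {x | f x ≠ none} ∪ M := by
    ext x
    by_cases hx : f x = none <;> by_cases hxM : x ∈ M <;>
      simp [hf', hx, hxM]
  refine ⟨f', hext, hdom, ?_⟩
  obtain ⟨k, hk, seq, ⟨h0, hchain⟩, hend⟩ := hseq
  by_cases hkM : seq k ∈ M
  · -- extend the chain by one step to z
    refine ⟨k + 1, by omega, fun i => if i ≤ k then seq i else z, ⟨by simp [h0], ?_⟩, ?_⟩
    · intro i hi
      rcases lt_or_eq_of_le (Nat.lt_succ_iff.mp hi) with h | h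
      · have : f (seq i) = some (seq (i + 1)) := hchain i h
        simp only [if_pos (le_of_lt h), if_pos (Nat.succ_le_of_lt h)]
        rw [hext _ (by simp [this]), this]
      · subst h
        simp only [if_pos (le_refl i), if_neg (by omega : ¬ i + 1 ≤ i)]
        simp [hf', hend, hkM]
    · simp only [if_neg (by omega : ¬ k + 1 ≤ k)]
      simp [hf', hzf, hzM]
  · refine ⟨k, by omega, seq, ⟨h0, ?_⟩, ?_⟩
    · intro i hi
      have : f (seq i) = some (seq (i + 1)) := hchain i hi
      rw [hext _ (by simp [this]), this]
    · simp [hf', hend, hkM]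
end

section
/- Countable diagonalization: Let (C_m)_{m∈ℕ} be a countable family of 'machines', where each machine is a function M : Oracle → Language with Oracle = (List Bool → Prop) and Language = (List Bool → Prop). Suppose for every m and every oracle restriction β supported on strings of length < N there exists an oracle extension α ⊇ β and a string x such that C_m(α)(x) ≠ L(α)(x), where L : Oracle → Language is a fixed target, and moreover α agrees with β below length N and the disagreement witness x together with the modified part of α can be confined to lengths ≥ N. Then there exists a single oracle α such that for all m, C_m(α) ≠ L(α). -/
/-- Oracles (and languages) are predicates on finite binary strings. -/
abbrev Oracle := List Bool → Prop

/-- countable diagonalization: let `(C m)` be a countable family of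
machines mapping oracles to languages and `L` a fixed target operator.  Suppose that
for every `m`, every length threshold `N` and every oracle `β` supported on strings
of length `< N`, there is an oracle `α` agreeing with `β` below length `N` (so the
modification is confined to lengths `≥ N`), supported below some `N' ≥ N`, and a
witness string `x` on which `C m` disagrees with `L` — robustly, for every oracle
`α'` agreeing with `α` below `N'`.  Then a single oracle `α` fools all machines
simultaneously: for all `m`, `C m α ≠ L α`. -/
theorem stmt8 (C : ℕ → Oracle → (List Bool → Prop)) (L : Oracle → (List Bool → Prop))
    (hstep : ∀ (m N : ℕ) (β : Oracle), (∀ w : List Bool, N ≤ w.length → ¬ β w) →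
      ∃ (α : Oracle) (N' : ℕ), N ≤ N' ∧
        (∀ w : List Bool, w.length < N → (α w ↔ β w)) ∧
        (∀ w : List Bool, N' ≤ w.length → ¬ α w) ∧
        ∃ x : List Bool, ∀ α' : Oracle,
          (∀ w : List Bool, w.length < N' → (α' w ↔ α w)) → ¬ (C m α' x ↔ L α' x)) :
    ∃ α : Oracle, ∀ m, C m α ≠ L α := by
  classical
  choose A Nf hN hagree hsupp X hX using hstep
  -- iterate the construction
  let seq : ℕ → Σ' (β : Oracle) (N : ℕ), ∀ w : List Bool, N ≤ w.length → ¬ β w :=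
    fun n => Nat.rec
      ⟨fun _ => False, 0, fun _ _ h => h⟩
      (fun n p =>
        have h' : ∀ w : List Bool, p.2.1 + 1 ≤ w.length → ¬ p.1 w :=
          fun w hw => p.2.2 w (Nat.le_of_succ_le hw)
        ⟨A n (p.2.1 + 1) p.1 h', Nf n (p.2.1 + 1) p.1 h',
          hsupp n (p.2.1 + 1) p.1 h'⟩) n
  set βs : ℕ → Oracle := fun n => (seq n).1 with hβs
  set Ns : ℕ → ℕ := fun n => (seq n).2.1 with hNs
  have hsupp' : ∀ n, ∀ w : List Bool, Ns n + 1 ≤ w.length → ¬ βs n w :=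
    fun n w hw => (seq n).2.2 w (Nat.le_of_succ_le hw)
  have hNstep : ∀ n, Ns n + 1 ≤ Ns (n + 1) := fun n => hN n (Ns n + 1) (βs n) _
  have hagree' : ∀ n, ∀ w : List Bool, w.length < Ns n + 1 → (βs (n+1) w ↔ βs n w) :=
    fun n => hagree n (Ns n + 1) (βs n) _
  have hNmono : ∀ m k, m ≤ k → Ns m ≤ Ns k := by
    intro m k h
    induction h with
    | refl => exact le_rfl
    | step h ih => exact le_trans ih (le_trans (Nat.le_succ _) (hNstep _))
  have chain : ∀ m k, m ≤ k → ∀ w : List Bool, w.length < Ns m → (βs k w ↔ βs m w) := by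
    intro m k h
    induction h with
    | refl => intro w _; rfl
    | @step j h ih =>
        intro w hw
        exact (hagree' j w (lt_of_lt_of_le hw (le_trans (hNmono m j h) (Nat.le_succ _)))).trans
          (ih w hw)
  refine ⟨fun w => ∃ n, w.length < Ns n ∧ βs n w, ?_⟩
  have halim : ∀ m, ∀ w : List Bool, w.length < Ns m →
      ((∃ n, w.length < Ns n ∧ βs n w) ↔ βs m w) := by
    intro m w hw
    constructor
    · rintro ⟨k, hk, hb⟩
      rcases le_total m k with h | h
      · exact (chain m k h w hw).mp hb
      · exact (chain k m h w hk).mpr hb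
    · intro hb; exact ⟨m, hw, hb⟩
  intro m hEq
  have key := hX m (Ns m + 1) (βs m) (fun w hw => hsupp' m w hw)
    (fun w => ∃ n, w.length < Ns n ∧ βs n w)
    (fun w hw => halim (m+1) w hw)
  exact key (by rw [hEq])
end

section
/- For any adaptive query strategy against oracles of the form A(f) for total f : {0,1}^n → {0,1}^n, making fewer than 2^n − 1 queries in total: there exist two total functions f, g : {0,1}^n → {0,1}^n such that the strategy receives identical answers on A(f) and A(g), yet the last bits of f^{d+1}(0^n) and g^{d+1}(0^n) differ, where d bounds the number of adaptive rounds and d+1 ≤ n-iteration depth considered. -/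
/-- Answers accumulated by the adaptive strategy `Q` against the bit-graph oracle
`A(f)` after `k` rounds, as a partial function: `Q k a` is the set of strings `x`
queried in round `k` given earlier answers `a`, and a queried `x` is answered by
`f x` (i.e. all bits `A(f)(x·⟨i⟩)`, `i < n`). -/
def accAns {n : ℕ} (f : Str n → Str n)
    (Q : ℕ → (Str n → Option (Str n)) → Finset (Str n)) : ℕ → Str n → Option (Str n)
  | 0 => fun _ => none
  | k + 1 => fun x =>
      if x ∈ Q k (accAns f Q k) then some (f x) else accAns f Q k x

/-!
The adversary answers every query by a fixed point, except the current end `e` of the chain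
`x₀, f x₀, f (f x₀), …`: when `e` is queried it is sent to a fresh point `y`, one neither answered
before nor queried in the same round. A round thus lengthens the chain by at most one, so after
`d` rounds `f^[m] x₀ = e` for some `m ≤ d` while `f e` is still free. Putting `f e = e`, or
`g e = w` and `g w = w` for a spare point `w` of the other colour, yields the two functions.
Fewer than `2^n − 1` queries leave two unanswered points in every round, and that is exactly
what lets `y` be chosen so that a spare point of the opposite colour survives.
-/

namespace BitGraphAdversary

variable {α : Type*}

def Extends (p : α → Option α) (f : α → α) : Prop :=
  ∀ x v, p x = some v → f x = v

lemma extends_getD (p : α → Option α) : Extends p fun x => (p x).getD x := by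
  intro x v h
  simp [h]

/-- With `S` the spare points and `b` the colour of the chain's end: `w` is where `g` will send
the end, and the second clause is what allows the chain to be extended while keeping such a `w`. -/
def Escape (c : α → Bool) (S : Set α) (b : Bool) : Prop :=
  ∃ w ∈ S, c w ≠ b ∧ (S ⊆ {w} ∨ ∃ v ∈ S, c v = b)

lemma exists_escape_diff {c : α → Bool} {S : Set α} {b : Bool} {u₁ u₂ : α}
    (hS : Escape c S b) (h₁ : u₁ ∈ S) (h₂ : u₂ ∈ S) (hne : u₁ ≠ u₂) :
    ∃ y, (y = u₁ ∨ y = u₂) ∧ Escape c (S \ {y}) (c y) := by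
  obtain ⟨w, hw, hwb, hsub | ⟨v, hv, hvb⟩⟩ := hS
  · exact absurd ((hsub h₁).trans (hsub h₂).symm) hne
  by_cases hc : c u₁ = c u₂
  · obtain ⟨w', hw', hw'c⟩ : ∃ w' ∈ S, c w' ≠ c u₁ := by
      by_cases hb : c u₁ = b
      · exact ⟨w, hw, hb ▸ hwb⟩
      · exact ⟨v, hv, hvb ▸ Ne.symm hb⟩
    refine ⟨u₁, Or.inl rfl, w', ⟨hw', ?_⟩, hw'c, Or.inr ⟨u₂, ⟨h₂, hne.symm⟩, hc.symm⟩⟩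
    rintro rfl
    exact hw'c rfl
  by_cases hz : ∃ z ∈ S, z ≠ u₁ ∧ z ≠ u₂
  · obtain ⟨z, hz, hz₁, hz₂⟩ := hz
    by_cases hzc : c z = c u₁
    · exact ⟨u₁, Or.inl rfl, u₂, ⟨h₂, hne.symm⟩, Ne.symm hc, Or.inr ⟨z, ⟨hz, hz₁⟩, hzc⟩⟩
    · refine ⟨u₂, Or.inr rfl, u₁, ⟨h₁, hne⟩, hc, Or.inr ⟨z, ⟨hz, hz₂⟩, ?_⟩⟩
      revert hzc hc
      cases c z <;> cases c u₁ <;> cases c u₂ <;> decide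
  · push Not at hz
    exact ⟨u₁, Or.inl rfl, u₂, ⟨h₂, hne.symm⟩, Ne.symm hc,
      Or.inl fun z ⟨hzS, hz₁⟩ => hz z hzS hz₁⟩

/-- The adversary's commitments: partial answers `p` and the current end `e` of the chain. -/
structure State (α : Type*) where
  p : α → Option α
  e : α

namespace State

def spare (s : State α) : Set α :=
  {x | x ≠ s.e ∧ ∀ v, s.p x = some v → v = x}

variable [DecidableEq α] {s : State α} {N : Finset α} {x y v : α} {f : α → α}

def step (s : State α) (N : Finset α) (y : α) : State α where
  p x := if x ∈ N ∧ s.p x = none then some (if x = s.e then y else x) else s.p x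
  e := if s.e ∈ N then y else s.e

lemma step_p_of_not_mem (hx : x ∉ N) : (s.step N y).p x = s.p x :=
  if_neg fun h => hx h.1

lemma step_p_of_eq_some (h : s.p x = some v) : (s.step N y).p x = some v := by
  simp [step, h]

lemma step_p_e (he : s.e ∈ N) (he₀ : s.p s.e = none) : (s.step N y).p s.e = some y := by
  simp [step, he, he₀]

lemma step_p_eq_none (h : (s.step N y).p x = none) : s.p x = none ∧ x ∉ N := by
  simp only [step] at h
  split_ifs at h with hx
  exact ⟨h, fun hN => hx ⟨hN, h⟩⟩

lemma step_p_eq_of_extends (hf : Extends (s.step N y).p f) :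
    (s.step N y).p = fun x => if x ∈ N then some (f x) else s.p x := by
  funext x
  by_cases hx : x ∈ N
  · obtain ⟨v, hv⟩ : ∃ v, (s.step N y).p x = some v :=
      Option.ne_none_iff_exists'.mp fun h => (step_p_eq_none h).2 hx
    rw [if_pos hx, hv, hf x v hv]
  · rw [if_neg hx, step_p_of_not_mem hx]

lemma spare_step_of_not_mem (he : s.e ∉ N) : (s.step N y).spare = s.spare := by
  ext x
  by_cases hx : x ∈ N ∧ s.p x = none
  · have hxe : x ≠ s.e := fun h => he (h ▸ hx.1)
    simp [spare, step, he, hx, hxe]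
  · simp [spare, step, he, hx]

lemma spare_step_of_mem (he : s.e ∈ N) (he₀ : s.p s.e = none) (hy : y ∉ N) :
    (s.step N y).spare = s.spare \ {y} := by
  have hye : y ≠ s.e := fun h => hy (h ▸ he)
  ext x
  by_cases hx : x ∈ N ∧ s.p x = none
  · by_cases hxe : x = s.e
    · subst hxe
      simp [spare, step, he, he₀, hye]
    · simp [spare, step, he, hx, hxe]
  · have hxe : x ≠ s.e := by rintro rfl; exact hx ⟨he, he₀⟩
    simp [spare, step, he, hx, hxe, and_comm]

end State

open State

lemma Extends.of_step [DecidableEq α] {s : State α} {N : Finset α} {y : α} {f : α → α}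
    (hf : Extends (s.step N y).p f) : Extends s.p f :=
  fun x v h => hf x v (step_p_of_eq_some h)

structure Good (c : α → Bool) (x₀ : α) (s : State α) (k : ℕ) : Prop where
  p_e : s.p s.e = none
  reaches : ∃ m ≤ k, ∀ f, Extends s.p f → f^[m] x₀ = s.e
  escape : Escape c s.spare (c s.e)

namespace Good

variable {c : α → Bool} {x₀ : α} {s : State α} {k : ℕ}

lemma exists_extends_iterate_ne (h : Good c x₀ s k) {d : ℕ} (hkd : k ≤ d) :
    ∃ f g, Extends s.p f ∧ Extends s.p g ∧ c (f^[d + 1] x₀) ≠ c (g^[d + 1] x₀) := by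
  classical
  obtain ⟨m, hm, hreach⟩ := h.reaches
  obtain ⟨w, ⟨hwe, hw⟩, hwc, -⟩ := h.escape
  set f : α → α := fun x => (s.p x).getD x with hf_def
  set g : α → α := fun x => if x = s.e then w else f x with hg_def
  have hf : Extends s.p f := extends_getD s.p
  have hg : Extends s.p g := fun x v hx => by
    have hxe : x ≠ s.e := by rintro rfl; simp [h.p_e] at hx
    simp [hg_def, hxe, hf x v hx]
  have hfe : f s.e = s.e := by simp [hf_def, h.p_e]
  have hgw : g w = w := by cases hpw : s.p w <;> simp [hg_def, hf_def, hwe, hpw, hw]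
  have hge : g s.e = w := if_pos rfl
  have hd : d + 1 = (d - m + 1) + m := by omega
  have hfd : f^[d + 1] x₀ = s.e := by
    rw [hd, Function.iterate_add_apply, hreach f hf, Function.iterate_fixed hfe]
  have hgd : g^[d + 1] x₀ = w := by
    rw [hd, Function.iterate_add_apply, hreach g hg, Function.iterate_succ_apply, hge,
      Function.iterate_fixed hgw]
  exact ⟨f, g, hf, hg, by rw [hfd, hgd]; exact hwc.symm⟩

variable [DecidableEq α] {N : Finset α} {y : α}

lemma step_of_not_mem (h : Good c x₀ s k) (he : s.e ∉ N) : Good c x₀ (s.step N y) (k + 1) := by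
  have he' : (s.step N y).e = s.e := if_neg he
  obtain ⟨m, hm, hreach⟩ := h.reaches
  refine ⟨?_, ⟨m, hm.trans k.le_succ, fun f hf => (hreach f hf.of_step).trans he'.symm⟩, ?_⟩
  · rw [he', step_p_of_not_mem he, h.p_e]
  · rw [he', spare_step_of_not_mem he]
    exact h.escape

lemma step_of_mem (h : Good c x₀ s k) (he : s.e ∈ N) (hy : s.p y = none) (hyN : y ∉ N)
    (hesc : Escape c (s.spare \ {y}) (c y)) : Good c x₀ (s.step N y) (k + 1) := by
  have he' : (s.step N y).e = y := if_pos he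
  obtain ⟨m, hm, hreach⟩ := h.reaches
  refine ⟨?_, ⟨m + 1, Nat.succ_le_succ hm, fun f hf => ?_⟩, ?_⟩
  · rw [he', step_p_of_not_mem hyN, hy]
  · rw [Function.iterate_succ_apply', hreach f hf.of_step, he', hf _ _ (step_p_e he h.p_e)]
  · rw [he', spare_step_of_mem he h.p_e hyN]
    exact hesc

end Good

variable [Nonempty α]

noncomputable def pick (c : α → Bool) (s : State α) (N : Finset α) : α :=
  Classical.epsilon fun y => s.p y = none ∧ y ∉ N ∧ Escape c (s.spare \ {y}) (c y)

lemma pick_spec {c : α → Bool} {s : State α} {N : Finset α}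
    (h : ∃ y, s.p y = none ∧ y ∉ N ∧ Escape c (s.spare \ {y}) (c y)) :
    s.p (pick c s N) = none ∧ pick c s N ∉ N ∧
      Escape c (s.spare \ {pick c s N}) (c (pick c s N)) :=
  Classical.epsilon_spec h

variable [DecidableEq α] {c : α → Bool} {x₀ : α}

lemma Good.step_pick {s : State α} {N : Finset α} {k : ℕ} {u₁ u₂ : α} (h : Good c x₀ s k)
    (hne : u₁ ≠ u₂) (h₁ : (s.step N (pick c s N)).p u₁ = none)
    (h₂ : (s.step N (pick c s N)).p u₂ = none) : Good c x₀ (s.step N (pick c s N)) (k + 1) := by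
  by_cases he : s.e ∈ N
  · have hspare : ∀ {u}, (s.step N (pick c s N)).p u = none → u ∈ s.spare := fun hu =>
      ⟨fun hue => (step_p_eq_none hu).2 (hue ▸ he), by simp [(step_p_eq_none hu).1]⟩
    obtain ⟨hy, hyN, hesc⟩ := pick_spec (c := c) (s := s) (N := N) <| by
      obtain ⟨y, rfl | rfl, hy⟩ := exists_escape_diff h.escape (hspare h₁) (hspare h₂) hne
      exacts [⟨_, (step_p_eq_none h₁).1, (step_p_eq_none h₁).2, hy⟩,
        ⟨_, (step_p_eq_none h₂).1, (step_p_eq_none h₂).2, hy⟩]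
    exact h.step_of_mem he hy hyN hesc
  · exact h.step_of_not_mem he

noncomputable def run (c : α → Bool) (x₀ : α) (Q : ℕ → (α → Option α) → Finset α) : ℕ → State α
  | 0 => ⟨fun _ => none, x₀⟩
  | k + 1 =>
    let s := run c x₀ Q k
    s.step (Q k s.p) (pick c s (Q k s.p))

variable {Q : ℕ → (α → Option α) → Finset α} {k j : ℕ} {x v : α}

lemma run_p_eq_some_of_le (hkj : k ≤ j) (h : (run c x₀ Q k).p x = some v) :
    (run c x₀ Q j).p x = some v := by
  induction hkj with
  | refl => exact h
  | step _ ih => exact step_p_of_eq_some ih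

lemma run_p_eq_none_of_le (hkj : k ≤ j) (h : (run c x₀ Q j).p x = none) :
    (run c x₀ Q k).p x = none := by
  cases hk : (run c x₀ Q k).p x with
  | none => rfl
  | some v => rw [run_p_eq_some_of_le hkj hk] at h; cases h

lemma good_run {d : ℕ} (h₀ : Escape c {x | x ≠ x₀} (c x₀))
    (hfresh : ∃ u₁ u₂, u₁ ≠ u₂ ∧ (run c x₀ Q d).p u₁ = none ∧ (run c x₀ Q d).p u₂ = none) :
    ∀ k ≤ d, Good c x₀ (run c x₀ Q k) k
  | 0, _ => ⟨rfl, ⟨0, le_rfl, fun _ _ => rfl⟩, by simpa [State.spare, run] using h₀⟩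
  | k + 1, hk => by
    have ⟨u₁, u₂, hne, h₁, h₂⟩ := hfresh
    exact (good_run h₀ hfresh k (by omega)).step_pick hne (run_p_eq_none_of_le hk h₁)
      (run_p_eq_none_of_le hk h₂)

variable {n : ℕ}

lemma escape_zeroStr (i : Fin n) : Escape (· i) {x : Str n | x ≠ zeroStr n} false := by
  set w := Function.update (zeroStr n) i true
  have hwi : w i = true := Function.update_self ..
  have hw : w ≠ zeroStr n := fun h => by simpa [zeroStr, hwi] using congrFun h i
  refine ⟨w, hw, by simp [hwi], or_iff_not_imp_right.mpr fun hnone x hx => ?_⟩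
  push Not at hnone
  funext j
  by_cases hj : j = i
  · subst hj
    simpa [hwi] using hnone x hx
  · have hx₀ : Function.update x i false = zeroStr n := by
      by_contra h
      exact hnone _ h (Function.update_self ..)
    simpa [w, hj] using congrFun hx₀ j

variable {c : Str n → Bool} {x₀ : Str n} {Q : ℕ → (Str n → Option (Str n)) → Finset (Str n)}

lemma accAns_eq_run {f : Str n → Str n} {j : ℕ} (hf : Extends (run c x₀ Q j).p f) :
    ∀ k ≤ j, accAns f Q k = (run c x₀ Q k).p
  | 0, _ => rfl
  | k + 1, hk => by
    have hf' : Extends (run c x₀ Q (k + 1)).p f := fun x v h => hf x v (run_p_eq_some_of_le hk h)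
    show (fun x => if x ∈ Q k (accAns f Q k) then some (f x) else accAns f Q k x) = _
    rw [accAns_eq_run hf k (by omega), run, step_p_eq_of_extends hf']

lemma exists_two_unanswered {d : ℕ}
    (hsize : ∀ f : Str n → Str n, {x | accAns f Q d x ≠ none}.ncard < 2 ^ n - 1) :
    ∃ u₁ u₂, u₁ ≠ u₂ ∧ (run c x₀ Q d).p u₁ = none ∧ (run c x₀ Q d).p u₂ = none := by
  have hlt := hsize fun x => ((run c x₀ Q d).p x).getD x
  rw [accAns_eq_run (extends_getD _) d le_rfl] at hlt
  set p := (run c x₀ Q d).p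
  have hsum := Set.ncard_add_ncard_compl {x | p x ≠ none}
  have hcard : Nat.card (Str n) = 2 ^ n := by simp
  obtain ⟨u₁, u₂, h₁, h₂, hne⟩ := (Set.one_lt_ncard_iff).mp
    (by omega : 1 < {x | p x ≠ none}ᶜ.ncard)
  exact ⟨u₁, u₂, hne, by simpa using h₁, by simpa using h₂⟩

end BitGraphAdversary

open BitGraphAdversary in
/-- adversary form of Theorem 3: for any adaptive `d`-round query
strategy against bit-graph oracles `A(f)`, making fewer than `2^n − 1` queries in
total on every run, there are total functions `f, g : {0,1}^n → {0,1}^n` that give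
identical answers to the strategy while the last bits of `f^{d+1}(0^n)` and
`g^{d+1}(0^n)` differ. -/
theorem stmt10 (n d : ℕ) (hn : 0 < n)
    (Q : ℕ → (Str n → Option (Str n)) → Finset (Str n))
    (hsize : ∀ f : Str n → Str n, {x | accAns f Q d x ≠ none}.ncard < 2 ^ n - 1) :
    ∃ f g : Str n → Str n,
      accAns f Q d = accAns g Q d ∧
      (f^[d + 1] (zeroStr n)) ⟨n - 1, Nat.sub_lt hn Nat.one_pos⟩ ≠
        (g^[d + 1] (zeroStr n)) ⟨n - 1, Nat.sub_lt hn Nat.one_pos⟩ := by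
  set i : Fin n := ⟨n - 1, Nat.sub_lt hn Nat.one_pos⟩
  have hgood : Good (· i) (zeroStr n) (run (· i) (zeroStr n) Q d) d :=
    good_run (escape_zeroStr i) (exists_two_unanswered hsize) d le_rfl
  obtain ⟨f, g, hf, hg, hfg⟩ := hgood.exists_extends_iterate_ne le_rfl
  exact ⟨f, g, by rw [accAns_eq_run hf d le_rfl, accAns_eq_run hg d le_rfl], hfg⟩
end
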